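/- In the Set Cover reduction network, modifying the IDR of b_j by adding an A_3-type auxiliary entity as a disjunct protects exactly b_j itself together with all entities a_i ∈ A_1 every one of whose disjuncts other than b_j corresponds to uncovered subsets; in particular, adding such disjuncts to the IDRs of {b_j : j ∈ C} for C ⊆ {1,...,m} protects exactly |C| + |{x_i : x_i ∈ S_j for some j ∈ C}| entities from induced failure. -/
import Mathlib


open scoped Classical

/-- The cascading failure process of the Implicative Interdependency Model.
`idr e = some M` means entity `e` has the set of minterms `M`; `idr e = none`
means `e` has no IDR and never fails unless initially failed. -/
noncomputable def cascade {E : Type} [Fintype E]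
    (idr : E → Option (Finset (Finset E))) (K : Finset E) : ℕ → Finset E
  | 0 => K
  | t + 1 =>
      cascade idr K t ∪
        Finset.univ.filter fun e =>
          ∃ M, idr e = some M ∧ ∀ m ∈ M, (m ∩ cascade idr K t).Nonempty

/-- Entities of the Set Cover reduction network:
`A₁ = Fin n` (one per universe element), `B = Fin m` (one per subset),
`A₂ = Fin m`, and `A₃ = Fin X` (entities with no IDRs). -/
abbrev Ent (n m X : ℕ) : Type := (Fin n ⊕ Fin m) ⊕ (Fin m ⊕ Fin X)

/-- `a_i ∈ A₁` -/
abbrev entA1 {n m X : ℕ} (i : Fin n) : Ent n m X := Sum.inl (Sum.inl i)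
/-- `b_j ∈ B` -/
abbrev entB {n m X : ℕ} (j : Fin m) : Ent n m X := Sum.inl (Sum.inr j)
/-- `a_{2j} ∈ A₂` -/
abbrev entA2 {n m X : ℕ} (j : Fin m) : Ent n m X := Sum.inr (Sum.inl j)
/-- entity of `A₃` -/
abbrev entA3 {n m X : ℕ} (x : Fin X) : Ent n m X := Sum.inr (Sum.inr x)

/-- IDRs of the Set Cover reduction network: `a_i ← b_{j₁} + ⋯ + b_{j_k}`
(over the subsets `S j` containing element `i`), `b_j ← a_{2j}`, and entities
of `A₂` and `A₃` have no IDRs. -/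
noncomputable def scIdr (n m X : ℕ) (S : Fin m → Finset (Fin n)) :
    Ent n m X → Option (Finset (Finset (Ent n m X)))
  | Sum.inl (Sum.inl i) =>
      some ((Finset.univ.filter fun j => i ∈ S j).image
        fun j => ({entB j} : Finset (Ent n m X)))
  | Sum.inl (Sum.inr j) => some {({entA2 j} : Finset (Ent n m X))}
  | Sum.inr _ => none

/-- The initial failure set `K = A₂` (the `|A₂|` most vulnerable entities). -/
noncomputable def scK (n m X : ℕ) : Finset (Ent n m X) :=
  Finset.univ.image fun j : Fin m => (entA2 j : Ent n m X)

/-- The final failure set of a cascade (the cascade stabilizes after at most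
`|E| - 1` steps, so we evaluate it at step `|E|`). -/
noncomputable def finalFail {E : Type} [Fintype E]
    (idr : E → Option (Finset (Finset E))) (K : Finset E) : Finset E :=
  cascade idr K (Fintype.card E)

/-- The reduction network modified on the set `C ⊆ {1,…,m}`: for each `j ∈ C`
the IDR of `b_j` gets the extra singleton disjunct `{aux j}` (the auxiliary
entity), i.e. `b_j ← a_{2j} + aux j`; all other IDRs are unchanged. -/
noncomputable def scIdrMod (n m X : ℕ) (S : Fin m → Finset (Fin n))
    (C : Finset (Fin m)) (aux : Fin m → Ent n m X) :
    Ent n m X → Option (Finset (Finset (Ent n m X)))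
  | Sum.inl (Sum.inr j) =>
      if j ∈ C then
        some (insert ({aux j} : Finset (Ent n m X))
          {({entA2 j} : Finset (Ent n m X))})
      else some {({entA2 j} : Finset (Ent n m X))}
  | e => scIdr n m X S e

section CascadeProtection

open Finset

lemma mem_inter'' {α : Type} {D : DecidableEq α} {a : α} {s t : Finset α} :
    a ∈ @Inter.inter _ (@Finset.instInter α D) s t ↔ a ∈ s ∧ a ∈ t :=
  @Finset.mem_inter α D a s t

lemma cascade_succ' {E : Type} [Fintype E] (idr : E → Option (Finset (Finset E)))
    (K : Finset E) (t : ℕ) :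
    cascade idr K (t + 1) = cascade idr K t ∪
      Finset.univ.filter (fun e =>
        ∃ M, idr e = some M ∧ ∀ m ∈ M, (m ∩ cascade idr K t).Nonempty) := rfl

lemma mem_cascade_succ' {E : Type} [Fintype E] {idr : E → Option (Finset (Finset E))}
    {K : Finset E} {t : ℕ} {e : E} :
    e ∈ cascade idr K (t + 1) ↔ e ∈ cascade idr K t ∨
      ∃ M, idr e = some M ∧ ∀ m ∈ M, (m ∩ cascade idr K t).Nonempty := by
  rw [cascade_succ']; simp

lemma cascade_mono' {E : Type} [Fintype E] (idr : E → Option (Finset (Finset E)))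
    (K : Finset E) : Monotone (cascade idr K) :=
  monotone_nat_of_le_succ fun t => by
    rw [cascade_succ']; exact Finset.subset_union_left

lemma cascade_subset_of_closed {E : Type} [Fintype E]
    (idr : E → Option (Finset (Finset E))) (K F : Finset E) (hK : K ⊆ F)
    (hcl : ∀ e M, idr e = some M → (∀ m ∈ M, (m ∩ F).Nonempty) → e ∈ F) :
    ∀ t, cascade idr K t ⊆ F
  | 0 => hK
  | t + 1 => by
      rw [cascade_succ']
      refine Finset.union_subset (cascade_subset_of_closed idr K F hK hcl t) ?_
      intro e he
      simp only [Finset.mem_filter] at he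
      obtain ⟨-, M, hM, hall⟩ := he
      refine hcl e M hM fun mm hmm => (hall mm hmm).mono ?_
      exact Finset.inter_subset_inter (Finset.Subset.refl _)
        (cascade_subset_of_closed idr K F hK hcl t)

/-- closed-form final failure set of the unmodified network -/
noncomputable def tgtU (n m X : ℕ) : Finset (Ent n m X) :=
  (Finset.univ.image fun i : Fin n => (entA1 i : Ent n m X)) ∪
    (Finset.univ.image fun j : Fin m => (entB j : Ent n m X)) ∪ scK n m X

/-- closed-form final failure set of the modified network -/
noncomputable def tgtM (n m X : ℕ) (S : Fin m → Finset (Fin n)) (C : Finset (Fin m)) :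
    Finset (Ent n m X) :=
  ((Finset.univ.filter fun i : Fin n => ¬ ∃ j ∈ C, i ∈ S j).image
      fun i => (entA1 i : Ent n m X)) ∪
    ((Finset.univ.filter fun j : Fin m => j ∉ C).image
      fun j => (entB j : Ent n m X)) ∪ scK n m X

lemma entA2_mem_scK {n m X : ℕ} (j : Fin m) : (entA2 j : Ent n m X) ∈ scK n m X := by
  simp [scK]

lemma two_le_card_Ent {n m X : ℕ} (hm : 0 < m) : 2 ≤ Fintype.card (Ent n m X) := by
  have : Fintype.card (Ent n m X) = n + m + (m + X) := by simp
  omega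

lemma entB_mem_cascadeU {n m X : ℕ} (S : Fin m → Finset (Fin n)) (j : Fin m) :
    (entB j : Ent n m X) ∈ cascade (scIdr n m X S) (scK n m X) 1 := by
  rw [mem_cascade_succ']
  right
  refine ⟨_, rfl, ?_⟩
  intro mm hmm
  simp only [Finset.mem_singleton] at hmm
  subst hmm
  refine ⟨entA2 j, ?_⟩
  rw [mem_inter'']
  exact ⟨Finset.mem_singleton_self _, entA2_mem_scK j⟩

lemma entB_mem_cascadeM {n m X : ℕ} (S : Fin m → Finset (Fin n)) (C : Finset (Fin m))
    (aux : Fin m → Ent n m X) (j : Fin m) (hj : j ∉ C) :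
    (entB j : Ent n m X) ∈ cascade (scIdrMod n m X S C aux) (scK n m X) 1 := by
  rw [mem_cascade_succ']
  right
  refine ⟨{({entA2 j} : Finset (Ent n m X))}, by simp [scIdrMod, hj], ?_⟩
  intro mm hmm
  simp only [Finset.mem_singleton] at hmm
  subst hmm
  refine ⟨entA2 j, ?_⟩
  rw [mem_inter'']
  exact ⟨Finset.mem_singleton_self _, entA2_mem_scK j⟩

lemma finalU (n m X : ℕ) (S : Fin m → Finset (Fin n))
    (hcov : ∀ i : Fin n, ∃ j, i ∈ S j) :
    finalFail (scIdr n m X S) (scK n m X) = tgtU n m X := by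
  apply Finset.Subset.antisymm
  · refine cascade_subset_of_closed _ _ _ Finset.subset_union_right ?_ _
    intro e M hM hall
    rcases e with (i | j) | e
    · exact Finset.mem_union_left _ (Finset.mem_union_left _ (by simp))
    · exact Finset.mem_union_left _ (Finset.mem_union_right _ (by simp))
    · simp [scIdr] at hM
  · intro e he
    have hm : 0 < m := by
      simp only [tgtU, Finset.mem_union, Finset.mem_image, scK] at he
      rcases he with (he | he) | he
      · obtain ⟨i, -, rfl⟩ := he
        obtain ⟨j, -⟩ := hcov i
        exact j.pos
      all_goals { obtain ⟨j, -, rfl⟩ := he; exact j.pos }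
    have h2 : e ∈ cascade (scIdr n m X S) (scK n m X) 2 := by
      simp only [tgtU, Finset.mem_union] at he
      rcases he with (he | he) | he
      · simp only [Finset.mem_image, Finset.mem_univ, true_and] at he
        obtain ⟨i, rfl⟩ := he
        rw [mem_cascade_succ']
        right
        refine ⟨_, rfl, ?_⟩
        intro mm hmm
        simp only [Finset.mem_image, Finset.mem_filter, Finset.mem_univ, true_and] at hmm
        obtain ⟨j, hij, rfl⟩ := hmm
        refine ⟨entB j, ?_⟩
        rw [mem_inter'']
        exact ⟨Finset.mem_singleton_self _, entB_mem_cascadeU S j⟩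
      · simp only [Finset.mem_image, Finset.mem_univ, true_and] at he
        obtain ⟨j, rfl⟩ := he
        exact cascade_mono' _ _ (by norm_num : (1:ℕ) ≤ 2) (entB_mem_cascadeU S j)
      · exact cascade_mono' _ _ (by norm_num : (0:ℕ) ≤ 2) he
    exact cascade_mono' _ _ (two_le_card_Ent hm) h2

lemma finalM (n m X : ℕ) (S : Fin m → Finset (Fin n))
    (hcov : ∀ i : Fin n, ∃ j, i ∈ S j)
    (C : Finset (Fin m)) (aux : Fin m → Ent n m X)
    (haux : ∀ j ∈ C, ∃ x : Fin X, aux j = entA3 x) :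
    finalFail (scIdrMod n m X S C aux) (scK n m X) = tgtM n m X S C := by
  apply Finset.Subset.antisymm
  · refine cascade_subset_of_closed _ _ _ Finset.subset_union_right ?_ _
    intro e M hM hall
    rcases e with (i | j) | e
    · -- a_i : fails only if no chosen subset covers i
      have hMval : M = (Finset.univ.filter fun j => i ∈ S j).image
          fun j => ({entB j} : Finset (Ent n m X)) := by
        simp only [scIdrMod, scIdr] at hM
        exact (Option.some_injective _ hM).symm
      refine Finset.mem_union_left _ (Finset.mem_union_left _ ?_)
      simp only [Finset.mem_image, Finset.mem_filter, Finset.mem_univ, true_and]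
      refine ⟨i, ?_, rfl⟩
      rintro ⟨j, hjC, hij⟩
      have hmem : ({entB j} : Finset (Ent n m X)) ∈ M := by
        rw [hMval]
        exact Finset.mem_image.2 ⟨j, Finset.mem_filter.2 ⟨Finset.mem_univ _, hij⟩, rfl⟩
      obtain ⟨z, hz⟩ := hall _ hmem
      rw [mem_inter''] at hz
      obtain ⟨hz1, hzt⟩ := hz
      rw [Finset.mem_singleton] at hz1
      subst hz1
      simp [tgtM, scK] at hzt
      exact hzt hjC
    · -- b_j
      by_cases hjC : j ∈ C
      · exfalso
        have hMval : M = insert ({aux j} : Finset (Ent n m X))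
            {({entA2 j} : Finset (Ent n m X))} := by
          simp only [scIdrMod, hjC, if_true] at hM
          exact (Option.some_injective _ hM).symm
        have hmem : ({aux j} : Finset (Ent n m X)) ∈ M := by
          rw [hMval]; exact Finset.mem_insert_self _ _
        obtain ⟨z, hz⟩ := hall _ hmem
        rw [mem_inter''] at hz
        obtain ⟨hz1, hzt⟩ := hz
        rw [Finset.mem_singleton] at hz1
        subst hz1
        obtain ⟨x, hx⟩ := haux j hjC
        rw [hx] at hzt
        simp [tgtM, scK] at hzt
      · refine Finset.mem_union_left _ (Finset.mem_union_right _ ?_)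
        simp only [Finset.mem_image, Finset.mem_filter, Finset.mem_univ, true_and]
        exact ⟨j, hjC, rfl⟩
    · simp [scIdrMod, scIdr] at hM
  · intro e he
    have hm : 0 < m := by
      simp only [tgtM, Finset.mem_union, Finset.mem_image, Finset.mem_filter, scK] at he
      rcases he with (he | he) | he
      · obtain ⟨i, -, rfl⟩ := he
        obtain ⟨j, -⟩ := hcov i
        exact j.pos
      all_goals { obtain ⟨j, -, rfl⟩ := he; exact j.pos }
    have h2 : e ∈ cascade (scIdrMod n m X S C aux) (scK n m X) 2 := by
      simp only [tgtM, Finset.mem_union] at he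
      rcases he with (he | he) | he
      · simp only [Finset.mem_image, Finset.mem_filter, Finset.mem_univ, true_and] at he
        obtain ⟨i, hni, rfl⟩ := he
        rw [mem_cascade_succ']
        right
        refine ⟨_, rfl, ?_⟩
        intro mm hmm
        simp only [Finset.mem_image, Finset.mem_filter, Finset.mem_univ, true_and] at hmm
        obtain ⟨j, hij, rfl⟩ := hmm
        have hjC : j ∉ C := fun h => hni ⟨j, h, hij⟩
        refine ⟨entB j, ?_⟩
        rw [mem_inter'']
        exact ⟨Finset.mem_singleton_self _, entB_mem_cascadeM S C aux j hjC⟩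
      · simp only [Finset.mem_image, Finset.mem_filter, Finset.mem_univ, true_and] at he
        obtain ⟨j, hjC, rfl⟩ := he
        exact cascade_mono' _ _ (by norm_num : (1:ℕ) ≤ 2)
          (entB_mem_cascadeM S C aux j hjC)
      · exact cascade_mono' _ _ (by norm_num : (0:ℕ) ≤ 2) he
    exact cascade_mono' _ _ (two_le_card_Ent hm) h2

end CascadeProtection


/-- Modifying the IDRs of `{b_j : j ∈ C}` with `A₃`-type auxiliary entities
protects exactly the chosen `b_j`'s together with every `a_i ∈ A₁` whose
element is covered by some chosen subset; in particular, exactly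
`|C| + |{i : ∃ j ∈ C, x_i ∈ S_j}|` entities are protected from induced
failure. -/
theorem scReduction_protection (n m X : ℕ) (S : Fin m → Finset (Fin n))
    (hcov : ∀ i : Fin n, ∃ j, i ∈ S j)
    (C : Finset (Fin m)) (aux : Fin m → Ent n m X)
    (haux : ∀ j ∈ C, ∃ x : Fin X, aux j = entA3 x) :
    finalFail (scIdr n m X S) (scK n m X) \
        finalFail (scIdrMod n m X S C aux) (scK n m X) =
      (C.image fun j => (entB j : Ent n m X)) ∪
        ((Finset.univ.filter fun i : Fin n => ∃ j ∈ C, i ∈ S j).image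
          fun i => (entA1 i : Ent n m X)) ∧
    (finalFail (scIdr n m X S) (scK n m X) \
        finalFail (scIdrMod n m X S C aux) (scK n m X)).card =
      C.card + (Finset.univ.filter fun i : Fin n => ∃ j ∈ C, i ∈ S j).card := by
  rw [finalU n m X S hcov, finalM n m X S hcov C aux haux]
  have hBinj : Function.Injective fun j : Fin m => (entB j : Ent n m X) :=
    fun a b hab => by simpa [entB] using hab
  have hA1inj : Function.Injective fun i : Fin n => (entA1 i : Ent n m X) :=
    fun a b hab => by simpa [entA1] using hab
  have hdisj : Disjoint (C.image fun j => (entB j : Ent n m X))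
      ((Finset.univ.filter fun i : Fin n => ∃ j ∈ C, i ∈ S j).image
        fun i => (entA1 i : Ent n m X)) := by
    simp [Finset.disjoint_left, entB, entA1]
  have hset : tgtU n m X \ tgtM n m X S C =
      (C.image fun j => (entB j : Ent n m X)) ∪
        ((Finset.univ.filter fun i : Fin n => ∃ j ∈ C, i ∈ S j).image
          fun i => (entA1 i : Ent n m X)) := by
    ext e
    rcases e with (i | j) | (j | x) <;>
      simp [tgtU, tgtM, scK, entA1, entB, entA2, entA3]
  refine ⟨hset, ?_⟩
  rw [hset, Finset.card_union_of_disjoint hdisj,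
    Finset.card_image_of_injective _ hBinj, Finset.card_image_of_injective _ hA1inj]
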